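/- arXiv:2603.01551 — 11 statements merged into one kernel-verified Lean document; each statement's English description precedes it below -/
import Mathlib

section
/- Let n ∈ ℕ and let R, U, H : ℝ → Matrix (Fin n) (Fin n) ℝ be differentiable matrix-valued functions such that for every t, R(t) is orthogonal (R(t)·R(t)ᵀ = 1) and U(t) is invertible. Define F := fun t => R(t)·U(t), the velocity gradient ℓ(t) := F'(t)·F(t)⁻¹, the Lagrangian rate r(t) := U'(t)·U(t)⁻¹, and h(t) := R(t)·H(t)·R(t)ᵀ. Then for every t: h'(t) − h(t)·ℓ(t)ᵀ − ℓ(t)·h(t) = R(t)·(H'(t) − H(t)·r(t)ᵀ − r(t)·H(t))·R(t)ᵀ (the upper Oldroyd rates of h and H are objective counterparts of each other). -/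
/-!
Writing `ℓ = Ḟ F⁻¹` for `F = R U` gives `ℓ = Ṙ Rᵀ + R r Rᵀ`, and the product rule gives
`ḣ = Ṙ H Rᵀ + R Ḣ Rᵀ + R H Ṙᵀ`. Substituting and using `Rᵀ R = 1`, the terms in `Ṙ` coming
from `ḣ` cancel exactly against those coming from `h ℓᵀ + ℓ h`, leaving `R (Ḣ - H rᵀ - r H) Rᵀ`.
-/

open Matrix

/-- Entrywise derivative of a matrix-valued function of a real variable. -/
noncomputable def matDeriv {n : ℕ} (A : ℝ → Matrix (Fin n) (Fin n) ℝ) (t : ℝ) :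
    Matrix (Fin n) (Fin n) ℝ :=
  Matrix.of fun i j => deriv (fun s => A s i j) t

section Algebra

variable {m α : Type*} [Fintype m] [DecidableEq m] [CommRing α]

def upperOldroydRate (dh h l : Matrix m m α) : Matrix m m α :=
  dh - h * lᵀ - l * h

theorem upperOldroydRate_conj {R A H dH r : Matrix m m α} (hR : Rᵀ * R = 1) :
    upperOldroydRate (A * H * Rᵀ + R * dH * Rᵀ + R * H * Aᵀ) (R * H * Rᵀ)
        (A * Rᵀ + R * r * Rᵀ) =
      R * upperOldroydRate dH H r * Rᵀ := by
  have cancel : ∀ X : Matrix m m α, Rᵀ * (R * X) = X := fun X => by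
    rw [← Matrix.mul_assoc, hR, Matrix.one_mul]
  simp only [upperOldroydRate, transpose_add, transpose_mul, transpose_transpose,
    Matrix.mul_add, Matrix.add_mul, Matrix.mul_sub, Matrix.sub_mul, Matrix.mul_assoc, cancel]
  abel

theorem add_mul_mul_inv_of_mul_transpose_eq_one {R U A B : Matrix m m α}
    (hR : R * Rᵀ = 1) (hU : IsUnit U) :
    (A * U + R * B) * (R * U)⁻¹ = A * Rᵀ + R * (B * U⁻¹) * Rᵀ := by
  have cancel : ∀ X : Matrix m m α, U * (U⁻¹ * X) = X := fun X => by
    rw [← Matrix.mul_assoc, mul_nonsing_inv U ((isUnit_iff_isUnit_det U).mp hU), Matrix.one_mul]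
  rw [Matrix.mul_inv_rev, inv_eq_right_inv hR]
  simp only [Matrix.add_mul, Matrix.mul_assoc, cancel]

end Algebra

section Derivative

variable {n : ℕ} {A B : ℝ → Matrix (Fin n) (Fin n) ℝ} {t : ℝ}

theorem differentiableAt_mul_apply (hA : ∀ i j, DifferentiableAt ℝ (fun s => A s i j) t)
    (hB : ∀ i j, DifferentiableAt ℝ (fun s => B s i j) t) (i j : Fin n) :
    DifferentiableAt ℝ (fun s => (A s * B s) i j) t := by
  simp only [mul_apply]
  exact DifferentiableAt.fun_sum fun k _ => (hA i k).fun_mul (hB k j)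

theorem matDeriv_mul (hA : ∀ i j, DifferentiableAt ℝ (fun s => A s i j) t)
    (hB : ∀ i j, DifferentiableAt ℝ (fun s => B s i j) t) :
    matDeriv (fun s => A s * B s) t = matDeriv A t * B t + A t * matDeriv B t := by
  ext i j
  simp only [matDeriv, of_apply, Matrix.add_apply, mul_apply]
  rw [deriv_fun_sum fun k _ => (hA i k).fun_mul (hB k j), ← Finset.sum_add_distrib]
  exact Finset.sum_congr rfl fun k _ => deriv_fun_mul (hA i k) (hB k j)

theorem matDeriv_transpose : matDeriv (fun s => (A s)ᵀ) t = (matDeriv A t)ᵀ := by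
  ext i j
  simp [matDeriv]

end Derivative

/-- Proposition 2.1 (upper Oldroyd case): the upper Oldroyd rates of objective
counterparts `h = R·H·Rᵀ` and `H` are objective counterparts of each other. -/
theorem upper_oldroyd_objective_counterpart {n : ℕ}
    (R U H : ℝ → Matrix (Fin n) (Fin n) ℝ)
    (hR : ∀ t, ∀ i j, DifferentiableAt ℝ (fun s => R s i j) t)
    (hU : ∀ t, ∀ i j, DifferentiableAt ℝ (fun s => U s i j) t)
    (hH : ∀ t, ∀ i j, DifferentiableAt ℝ (fun s => H s i j) t)
    (horth : ∀ t, R t * (R t)ᵀ = 1)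
    (hinv : ∀ t, IsUnit (U t)) :
    ∀ t : ℝ,
      let F : ℝ → Matrix (Fin n) (Fin n) ℝ := fun s => R s * U s
      let ℓ : Matrix (Fin n) (Fin n) ℝ := matDeriv F t * (F t)⁻¹
      let r : Matrix (Fin n) (Fin n) ℝ := matDeriv U t * (U t)⁻¹
      let h : ℝ → Matrix (Fin n) (Fin n) ℝ := fun s => R s * H s * (R s)ᵀ
      matDeriv h t - h t * ℓᵀ - ℓ * h t =
        R t * (matDeriv H t - H t * rᵀ - r * H t) * (R t)ᵀ := by
  intro t F ℓ r h
  have hℓ : ℓ = matDeriv R t * (R t)ᵀ + R t * r * (R t)ᵀ := by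
    simp only [ℓ, F, matDeriv_mul (hR t) (hU t)]
    exact add_mul_mul_inv_of_mul_transpose_eq_one (horth t) (hinv t)
  have hh : matDeriv h t = matDeriv R t * H t * (R t)ᵀ + R t * matDeriv H t * (R t)ᵀ
      + R t * H t * (matDeriv R t)ᵀ := by
    rw [matDeriv_mul (A := fun s => R s * H s) (B := fun s => (R s)ᵀ)
      (differentiableAt_mul_apply (hR t) (hH t)) (fun i j => hR t j i),
      matDeriv_mul (hR t) (hH t), matDeriv_transpose, Matrix.add_mul]
  rw [hh, hℓ]
  exact upperOldroydRate_conj (mul_eq_one_comm.mp (horth t))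
end

section
/- Let n ∈ ℕ and let R, U, H : ℝ → Matrix (Fin n) (Fin n) ℝ be differentiable matrix-valued functions such that for every t, R(t) is orthogonal (R(t)·R(t)ᵀ = 1) and U(t) is invertible. Define F := fun t => R(t)·U(t), ℓ(t) := F'(t)·F(t)⁻¹, r(t) := U'(t)·U(t)⁻¹, and h(t) := R(t)·H(t)·R(t)ᵀ. Then for every t: h'(t) + h(t)·ℓ(t) + ℓ(t)ᵀ·h(t) = R(t)·(H'(t) + H(t)·r(t) + r(t)ᵀ·H(t))·R(t)ᵀ (the lower Oldroyd rates of h and H are objective counterparts of each other). -/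
/-!
Write `Ω = R'·Rᵀ`; differentiating `R·Rᵀ = 1` shows `Ω` is skew. Since `F = R·U`, the velocity
gradient is `ℓ = Ω + R·r·Rᵀ`, and `h' = R'·H·Rᵀ + R·H'·Rᵀ + R·H·R'ᵀ`. Substituting, the terms
involving `Ω` cancel in pairs by skewness, and conjugation by the orthogonal `R` carries the rest
to `R·(H' + H·r + rᵀ·H)·Rᵀ`.
-/

open Matrix

namespace Matrix

variable {m α : Type*} [Fintype m] [DecidableEq m] [CommRing α]

def lowerOldroyd (H' H L : Matrix m m α) : Matrix m m α :=
  H' + H * L + Lᵀ * H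

/-- `Q'` stands for the derivative of `Q`, so the first argument is the derivative of `Q·H·Qᵀ`
and the third that of `Q·U` times `(Q·U)⁻¹`, where `L = U'·U⁻¹`. -/
theorem lowerOldroyd_conj {Q Q' H' H L : Matrix m m α} (hQ : Q * Qᵀ = 1)
    (hskew : Q' * Qᵀ + Q * Q'ᵀ = 0) :
    lowerOldroyd (Q' * H * Qᵀ + Q * H' * Qᵀ + Q * H * Q'ᵀ) (Q * H * Qᵀ) (Q' * Qᵀ + Q * L * Qᵀ) =
      Q * lowerOldroyd H' H L * Qᵀ := by
  have hQ' : Qᵀ * Q = 1 := mul_eq_one_comm.mp hQ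
  have cancel : ∀ X : Matrix m m α, Q * (Qᵀ * X) = X := fun X => by
    rw [← Matrix.mul_assoc, hQ, Matrix.one_mul]
  have cancel' : ∀ X : Matrix m m α, Qᵀ * (Q * X) = X := fun X => by
    rw [← Matrix.mul_assoc, hQ', Matrix.one_mul]
  have hQ'T : Q'ᵀ = -(Qᵀ * Q' * Qᵀ) := by
    rw [← cancel' Q'ᵀ, eq_neg_of_add_eq_zero_right hskew]
    simp only [Matrix.mul_neg, Matrix.mul_assoc]
  simp only [lowerOldroyd, transpose_add, transpose_mul, transpose_transpose, hQ'T,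
    Matrix.add_mul, Matrix.mul_add, Matrix.mul_neg, Matrix.neg_mul, Matrix.mul_assoc, cancel,
    cancel']
  abel

end Matrix

section matDeriv

variable {n : ℕ} {A B : ℝ → Matrix (Fin n) (Fin n) ℝ} {t : ℝ}

theorem matDeriv_const (C : Matrix (Fin n) (Fin n) ℝ) : matDeriv (fun _ => C) t = 0 := by
  ext i j
  simp [matDeriv]

theorem matDeriv_mul_transpose_add_eq_zero {R : ℝ → Matrix (Fin n) (Fin n) ℝ}
    (hR : ∀ i j, DifferentiableAt ℝ (fun s => R s i j) t) (horth : ∀ s, R s * (R s)ᵀ = 1) :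
    matDeriv R t * (R t)ᵀ + R t * (matDeriv R t)ᵀ = 0 := by
  rw [← matDeriv_transpose, ← matDeriv_mul (B := fun s => (R s)ᵀ) hR fun i j => hR j i,
    funext horth, matDeriv_const]

theorem matDeriv_conj {R H : ℝ → Matrix (Fin n) (Fin n) ℝ}
    (hR : ∀ i j, DifferentiableAt ℝ (fun s => R s i j) t)
    (hH : ∀ i j, DifferentiableAt ℝ (fun s => H s i j) t) :
    matDeriv (fun s => R s * H s * (R s)ᵀ) t =
      matDeriv R t * H t * (R t)ᵀ + R t * matDeriv H t * (R t)ᵀ + R t * H t * (matDeriv R t)ᵀ := by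
  rw [matDeriv_mul (B := fun s => (R s)ᵀ) (differentiableAt_mul_apply hR hH) fun i j => hR j i,
    matDeriv_mul hR hH, matDeriv_transpose, Matrix.add_mul]

theorem matDeriv_mul_mul_inv {R U : ℝ → Matrix (Fin n) (Fin n) ℝ}
    (hR : ∀ i j, DifferentiableAt ℝ (fun s => R s i j) t)
    (hU : ∀ i j, DifferentiableAt ℝ (fun s => U s i j) t)
    (horth : R t * (R t)ᵀ = 1) (hinv : IsUnit (U t)) :
    matDeriv (fun s => R s * U s) t * (R t * U t)⁻¹ =
      matDeriv R t * (R t)ᵀ + R t * (matDeriv U t * (U t)⁻¹) * (R t)ᵀ := by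
  have hUU : U t * (U t)⁻¹ = 1 := mul_nonsing_inv _ ((isUnit_iff_isUnit_det _).mp hinv)
  rw [matDeriv_mul hR hU, Matrix.mul_inv_rev, inv_eq_right_inv horth, Matrix.add_mul,
    Matrix.mul_assoc (matDeriv R t), ← Matrix.mul_assoc (U t), hUU, Matrix.one_mul]
  simp only [Matrix.mul_assoc]

end matDeriv

/-- Proposition 2.1 (lower Oldroyd case): the lower Oldroyd rates of objective
counterparts `h = R·H·Rᵀ` and `H` are objective counterparts of each other. -/
theorem lower_oldroyd_objective_counterpart {n : ℕ}
    (R U H : ℝ → Matrix (Fin n) (Fin n) ℝ)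
    (hR : ∀ t, ∀ i j, DifferentiableAt ℝ (fun s => R s i j) t)
    (hU : ∀ t, ∀ i j, DifferentiableAt ℝ (fun s => U s i j) t)
    (hH : ∀ t, ∀ i j, DifferentiableAt ℝ (fun s => H s i j) t)
    (horth : ∀ t, R t * (R t)ᵀ = 1)
    (hinv : ∀ t, IsUnit (U t)) :
    ∀ t : ℝ,
      let F : ℝ → Matrix (Fin n) (Fin n) ℝ := fun s => R s * U s
      let ℓ : Matrix (Fin n) (Fin n) ℝ := matDeriv F t * (F t)⁻¹
      let r : Matrix (Fin n) (Fin n) ℝ := matDeriv U t * (U t)⁻¹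
      let h : ℝ → Matrix (Fin n) (Fin n) ℝ := fun s => R s * H s * (R s)ᵀ
      matDeriv h t + h t * ℓ + ℓᵀ * h t =
        R t * (matDeriv H t + H t * r + rᵀ * H t) * (R t)ᵀ := by
  intro t F ℓ r h
  have hℓ : ℓ = matDeriv R t * (R t)ᵀ + R t * r * (R t)ᵀ :=
    matDeriv_mul_mul_inv (hR t) (hU t) (horth t) (hinv t)
  have hh : matDeriv h t = matDeriv R t * H t * (R t)ᵀ + R t * matDeriv H t * (R t)ᵀ +
      R t * H t * (matDeriv R t)ᵀ := matDeriv_conj (hR t) (hH t)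
  rw [hh, hℓ]
  exact lowerOldroyd_conj (horth t) (matDeriv_mul_transpose_add_eq_zero (hR t) horth)
end

section
/- For every α ∈ ℝ, define the 2×2 real matrices F_L(α) := (cosh(2α))^(−1/2) • ![![1, sinh(2α)], ![0, cosh(2α)]], V(α) := ![![cosh α, sinh α], ![sinh α, cosh α]], and R(α) := (cosh(2α))^(−1/2) • ![![cosh α, sinh α], ![−sinh α, cosh α]]. Then: (i) F_L(α) = V(α)·R(α); (ii) R(α)·R(α)ᵀ = 1 and det R(α) = 1; (iii) V(α) is symmetric and positive definite; (iv) det F_L(α) = 1. -/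
/-! The left stretch is the Lorentz boost `V = !![cosh α, sinh α; sinh α, cosh α]`, and the double
angle formulas give `V * !![cosh α, sinh α; -sinh α, cosh α] = !![1, sinh 2α; 0, cosh 2α]`. The second
factor is a rotation scaled by `√(cosh² α + sinh² α) = √(cosh 2α)`, so dividing both sides by
`√(cosh 2α)` yields `F_L = V * R` with `R` a rotation; `V` is positive definite because
`det V = cosh² α - sinh² α = 1` and `cosh α > 0`. -/

open Matrix Real

namespace Matrix

variable {R : Type*} [CommRing R]

theorem mul_transpose_fin_two_rotation (p q : R) :
    !![p, q; -q, p] * !![p, q; -q, p]ᵀ = (p ^ 2 + q ^ 2) • (1 : Matrix (Fin 2) (Fin 2) R) := by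
  ext i j
  fin_cases i <;> fin_cases j <;> simp [mul_apply, Fin.sum_univ_two] <;> ring

theorem det_fin_two_rotation (p q : R) : !![p, q; -q, p].det = p ^ 2 + q ^ 2 := by
  rw [det_fin_two_of]; ring

theorem isSymm_fin_two {α : Type*} (a b d : α) : !![a, b; b, d].IsSymm :=
  IsSymm.ext fun i j => by fin_cases i <;> fin_cases j <;> rfl

theorem posDef_fin_two_of {K : Type*} [Field K] [LinearOrder K] [IsStrictOrderedRing K]
    [StarRing K] [TrivialStar K] {a b d : K} (ha : 0 < a) (hdet : 0 < !![a, b; b, d].det) :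
    !![a, b; b, d].PosDef := by
  refine .of_dotProduct_mulVec_pos ?_ fun x hx => ?_
  · exact isHermitian_iff_isSymm.2 (isSymm_fin_two a b d)
  · rw [det_fin_two_of] at hdet
    have hquad : a * (star x ⬝ᵥ (!![a, b; b, d] *ᵥ x))
        = (a * x 0 + b * x 1) ^ 2 + (a * d - b * b) * x 1 ^ 2 := by
      simp only [dotProduct, Pi.star_apply, star_trivial, cons_mulVec, Fin.sum_univ_two,
        cons_val_zero, cons_val_one, cons_val_fin_one, empty_mulVec]
      ring
    refine pos_of_mul_pos_right (hquad ▸ ?_) ha.le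
    by_cases h1 : x 1 = 0
    · have h0 : x 0 ≠ 0 := fun h0 => hx (by ext i; fin_cases i <;> simp [h0, h1])
      have : 0 < (a * x 0) ^ 2 := by positivity
      simpa [h1] using this
    · positivity

end Matrix

theorem Real.cosh_sinh_mul_cosh_sinh (α : ℝ) :
    !![cosh α, sinh α; sinh α, cosh α] * !![cosh α, sinh α; -sinh α, cosh α]
      = !![1, sinh (2 * α); 0, cosh (2 * α)] := by
  rw [mul_fin_two, cosh_two_mul, sinh_two_mul, ← cosh_sq_sub_sinh_sq α]
  ring_nf

/-- Left polar decomposition of the LFSS deformation gradient (Eqs. (3-8)–(3-10)):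
`F_L = V·R` with `R` a rotation, `V` symmetric positive definite, and `det F_L = 1`. -/
theorem lfss_polar_decomposition (α : ℝ) :
    let F_L : Matrix (Fin 2) (Fin 2) ℝ :=
      (Real.sqrt (Real.cosh (2*α)))⁻¹ • !![1, Real.sinh (2*α); 0, Real.cosh (2*α)]
    let V : Matrix (Fin 2) (Fin 2) ℝ :=
      !![Real.cosh α, Real.sinh α; Real.sinh α, Real.cosh α]
    let R : Matrix (Fin 2) (Fin 2) ℝ :=
      (Real.sqrt (Real.cosh (2*α)))⁻¹ • !![Real.cosh α, Real.sinh α; -Real.sinh α, Real.cosh α]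
    F_L = V * R ∧ R * Rᵀ = 1 ∧ R.det = 1 ∧ V.IsSymm ∧ V.PosDef ∧ F_L.det = 1 := by
  dsimp only
  have hcosh : 0 < cosh (2 * α) := cosh_pos _
  have hnorm : (√(cosh (2 * α)))⁻¹ ^ 2 * cosh (2 * α) = 1 := by
    rw [inv_pow, sq_sqrt hcosh.le, inv_mul_cancel₀ hcosh.ne']
  have hnorm' : (√(cosh (2 * α)))⁻¹ ^ 2 * (cosh α ^ 2 + sinh α ^ 2) = 1 := by
    rwa [← cosh_two_mul]
  refine ⟨?_, ?_, ?_, ?_, ?_, ?_⟩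
  · rw [Matrix.mul_smul, cosh_sinh_mul_cosh_sinh]
  · rw [transpose_smul, smul_mul, Matrix.mul_smul, smul_smul, mul_transpose_fin_two_rotation,
      smul_smul, ← sq, hnorm', one_smul]
  · rw [det_smul, det_fin_two_rotation, Fintype.card_fin, hnorm']
  · exact isSymm_fin_two _ _ _
  · refine posDef_fin_two_of (cosh_pos α) ?_
    rw [det_fin_two_of, ← sq, ← sq, cosh_sq_sub_sinh_sq]
    exact one_pos
  · rw [det_smul, det_fin_two_of, Fintype.card_fin, mul_zero, sub_zero, one_mul, hnorm]
end

section
/- For every α ∈ ℝ, define the 2×2 real matrices F_R(α) := (cosh(2α))^(−1/2) • ![![cosh(2α), sinh(2α)], ![0, 1]], V(α) := ![![cosh α, sinh α], ![sinh α, cosh α]], and R(α) := (cosh(2α))^(−1/2) • ![![cosh α, sinh α], ![−sinh α, cosh α]]. Then: (i) F_R(α) = R(α)·V(α), so the right stretch tensor U_R of the RFSS deformation equals the left stretch tensor V_L of the LFSS deformation; and (ii) F_L(α)·F_L(α)ᵀ = F_R(α)ᵀ·F_R(α) = ![![cosh(2α), sinh(2α)], ![sinh(2α), cosh(2α)]],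 where F_L(α) := (cosh(2α))^(−1/2) • ![![1, sinh(2α)], ![0, cosh(2α)]]. -/
open Matrix Real

/-! Writing `F = (√(cosh 2α))⁻¹ • A`, both Cauchy–Green tensors equal `(cosh 2α)⁻¹ • (A Aᵀ)` (resp.
`AᵀA`), and for the two shear matrices this product is `cosh 2α • !![cosh 2α, sinh 2α; sinh 2α,
cosh 2α]` by `cosh² - sinh² = 1`. The polar decomposition reduces to the double-angle formulas. -/

theorem Matrix.inv_sqrt_smul_mul_transpose {m n : Type*} [Fintype n] {c : ℝ} (hc : 0 ≤ c)
    (A : Matrix m n ℝ) :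
    (√c)⁻¹ • A * ((√c)⁻¹ • A)ᵀ = c⁻¹ • (A * Aᵀ) := by
  rw [transpose_smul, Matrix.smul_mul, Matrix.mul_smul, smul_smul, ← mul_inv, mul_self_sqrt hc]

theorem Matrix.transpose_inv_sqrt_smul_mul {m n : Type*} [Fintype m] {c : ℝ} (hc : 0 ≤ c)
    (A : Matrix m n ℝ) :
    ((√c)⁻¹ • A)ᵀ * ((√c)⁻¹ • A) = c⁻¹ • (Aᵀ * A) := by
  rw [transpose_smul, Matrix.smul_mul, Matrix.mul_smul, smul_smul, ← mul_inv, mul_self_sqrt hc]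

section HyperbolicShear

variable {R : Type*} [CommRing R] {c s : R}

theorem Matrix.shear_mul_transpose_of_sq_sub_sq_eq_one (h : c ^ 2 - s ^ 2 = 1) :
    !![1, s; 0, c] * !![1, s; 0, c]ᵀ = c • !![c, s; s, c] := by
  ext i j; fin_cases i <;> fin_cases j <;> simp [mul_apply, Fin.sum_univ_two] <;>
    grind

theorem Matrix.transpose_mul_shear_of_sq_sub_sq_eq_one (h : c ^ 2 - s ^ 2 = 1) :
    !![c, s; 0, 1]ᵀ * !![c, s; 0, 1] = c • !![c, s; s, c] := by
  ext i j; fin_cases i <;> fin_cases j <;> simp [mul_apply, Fin.sum_univ_two] <;>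
    grind

end HyperbolicShear

theorem Real.rotation_mul_boost_eq (a : ℝ) :
    !![cosh a, sinh a; -sinh a, cosh a] * !![cosh a, sinh a; sinh a, cosh a] =
      !![cosh (2 * a), sinh (2 * a); 0, 1] := by
  rw [cosh_two_mul, sinh_two_mul]
  ext i j; fin_cases i <;> fin_cases j <;> simp [mul_apply, Fin.sum_univ_two] <;>
    grind [cosh_sq_sub_sinh_sq a]

/-- The RFSS deformation gradient satisfies `F_R = R·V` (so `U_R = V_L`), and the
left Cauchy–Green tensor of LFSS equals the right Cauchy–Green tensor of RFSS
(the key fact underlying Proposition 3.2 of the paper). -/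
theorem rfss_polar_decomposition_and_cauchy_green (α : ℝ) :
    let F_R : Matrix (Fin 2) (Fin 2) ℝ :=
      (Real.sqrt (Real.cosh (2*α)))⁻¹ • !![Real.cosh (2*α), Real.sinh (2*α); 0, 1]
    let V : Matrix (Fin 2) (Fin 2) ℝ :=
      !![Real.cosh α, Real.sinh α; Real.sinh α, Real.cosh α]
    let R : Matrix (Fin 2) (Fin 2) ℝ :=
      (Real.sqrt (Real.cosh (2*α)))⁻¹ • !![Real.cosh α, Real.sinh α; -Real.sinh α, Real.cosh α]
    let F_L : Matrix (Fin 2) (Fin 2) ℝ :=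
      (Real.sqrt (Real.cosh (2*α)))⁻¹ • !![1, Real.sinh (2*α); 0, Real.cosh (2*α)]
    F_R = R * V ∧
    F_L * F_Lᵀ = !![Real.cosh (2*α), Real.sinh (2*α); Real.sinh (2*α), Real.cosh (2*α)] ∧
    F_Rᵀ * F_R = !![Real.cosh (2*α), Real.sinh (2*α); Real.sinh (2*α), Real.cosh (2*α)] := by
  intro F_R V R F_L
  have hc : 0 < cosh (2 * α) := cosh_pos _
  have hcs : cosh (2 * α) ^ 2 - sinh (2 * α) ^ 2 = 1 := cosh_sq_sub_sinh_sq _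
  refine ⟨?_, ?_, ?_⟩
  · rw [smul_mul_assoc, rotation_mul_boost_eq]
  · rw [inv_sqrt_smul_mul_transpose hc.le, shear_mul_transpose_of_sq_sub_sq_eq_one hcs,
      inv_smul_smul₀ hc.ne']
  · rw [transpose_inv_sqrt_smul_mul hc.le, transpose_mul_shear_of_sq_sub_sq_eq_one hcs,
      inv_smul_smul₀ hc.ne']
end

section
/- For α, s ∈ ℝ, let R(α) := (cosh(2α))^(−1/2) • ![![cosh α, sinh α], ![−sinh α, cosh α]] and σ := s • ![![0, 1], ![1, 0]] (2×2 real matrices). Then: (i) R(α)ᵀ·σ·R(α) = (s / cosh(2α)) • ![![−sinh(2α), 1], ![1, sinh(2α)]]; and (ii) if α > 0 and s ≠ 0, then the (1,1) entry of R(α)ᵀ·σ·R(α) is nonzero, so R(α)ᵀ·σ·R(α) is not of pure shear form (i.e., it has a nonzero diagonal entry). -/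
open Matrix Real

/-- Proposition 3.1: the rotated counterpart `Rᵀ·σ·R` of an Eulerian pure shear
stress `σ` under finite simple shear is not of pure shear form for `α > 0`. -/
theorem rotated_pure_shear_not_pure_shear (α s : ℝ) :
    let R : Matrix (Fin 2) (Fin 2) ℝ :=
      (Real.sqrt (Real.cosh (2*α)))⁻¹ • !![Real.cosh α, Real.sinh α; -Real.sinh α, Real.cosh α]
    let σ : Matrix (Fin 2) (Fin 2) ℝ := s • !![0, 1; 1, 0]
    Rᵀ * σ * R = (s / Real.cosh (2*α)) • !![-Real.sinh (2*α), 1; 1, Real.sinh (2*α)] ∧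
    (0 < α → s ≠ 0 → (Rᵀ * σ * R) 0 0 ≠ 0) := by
  intro R σ
  have hc : (0:ℝ) < Real.cosh (2*α) := Real.cosh_pos _
  have hs : Real.sqrt (Real.cosh (2*α)) * Real.sqrt (Real.cosh (2*α)) = Real.cosh (2*α) :=
    Real.mul_self_sqrt hc.le
  have hsp : (0:ℝ) < Real.sqrt (Real.cosh (2*α)) := Real.sqrt_pos.mpr hc
  have hinv : (Real.sqrt (Real.cosh (2*α)))⁻¹ * (Real.sqrt (Real.cosh (2*α)))⁻¹
      = (Real.cosh (2*α))⁻¹ := by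
    rw [← mul_inv, hs]
  have hsinh : Real.sinh (2*α) = 2 * Real.sinh α * Real.cosh α := by
    rw [two_mul, Real.sinh_add]; ring
  have hcosh : Real.cosh (2*α) = Real.cosh α * Real.cosh α + Real.sinh α * Real.sinh α := by
    rw [two_mul, Real.cosh_add]
  have hmain : Rᵀ * σ * R = (s / Real.cosh (2*α)) • !![-Real.sinh (2*α), 1; 1, Real.sinh (2*α)] := by
    have hfac : Rᵀ * σ * R
        = ((Real.sqrt (Real.cosh (2*α)))⁻¹ * (Real.sqrt (Real.cosh (2*α)))⁻¹ * s) •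
          (!![Real.cosh α, Real.sinh α; -Real.sinh α, Real.cosh α]ᵀ * !![0, 1; 1, 0] *
            !![Real.cosh α, Real.sinh α; -Real.sinh α, Real.cosh α]) := by
      show ((Real.sqrt (Real.cosh (2*α)))⁻¹ • !![Real.cosh α, Real.sinh α; -Real.sinh α, Real.cosh α])ᵀ
          * (s • !![0, 1; 1, 0])
          * ((Real.sqrt (Real.cosh (2*α)))⁻¹ • !![Real.cosh α, Real.sinh α; -Real.sinh α, Real.cosh α]) = _
      simp only [Matrix.transpose_smul, Matrix.smul_mul, Matrix.mul_smul, smul_smul]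
      congr 1
      ring
    have hT : !![Real.cosh α, Real.sinh α; -Real.sinh α, Real.cosh α]ᵀ
        = !![Real.cosh α, -Real.sinh α; Real.sinh α, Real.cosh α] := by
      ext i j; fin_cases i <;> fin_cases j <;> simp
    rw [hfac, hinv, hT]
    ext i j
    fin_cases i <;> fin_cases j <;>
      simp [Matrix.mul_apply, Fin.sum_univ_two, div_eq_mul_inv] <;>
      first
        | linear_combination (s * (Real.cosh (2*α))⁻¹) * hsinh
        | linear_combination (-(s * (Real.cosh (2*α))⁻¹)) * hsinh
        | linear_combination (s * (Real.cosh (2*α))⁻¹) * (Real.cosh_sq_sub_sinh_sq α)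
  refine ⟨hmain, fun hα hsne => ?_⟩
  rw [hmain]
  have h2 : (0:ℝ) < Real.sinh (2*α) := Real.sinh_pos_iff.mpr (by linarith)
  simp only [Matrix.smul_apply, Matrix.cons_val_zero, Matrix.cons_val', Matrix.empty_val',
    Matrix.cons_val_fin_one, smul_eq_mul]
  have : (!![-Real.sinh (2*α), 1; 1, Real.sinh (2*α)] : Matrix (Fin 2) (Fin 2) ℝ) 0 0
      = -Real.sinh (2*α) := by simp
  rw [this]
  intro h
  have := mul_eq_zero.mp h
  rcases this with h1 | h1
  · exact absurd h1 (div_ne_zero hsne hc.ne')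
  · linarith
end

section
/- Let a, b, c, s ∈ ℝ with s ≠ 0. Define the 3×3 real matrices σ := ![![0, s, 0], ![s, 0, 0], ![0, 0, 0]] and B := ![![a^2 + b^2, b*c, 0], ![b*c, c^2, 0], ![0, 0, 1]]. If σ·B = B·σ, then a^2 + b^2 = c^2. -/
open Matrix

/-- Moon–Truesdell necessary condition (Eq. (1-7)): if an Eulerian pure shear stress
commutes with the left Cauchy–Green tensor of the planar motion, then `a² + b² = c²`. -/
theorem eulerian_pure_shear_necessary_condition (a b c s : ℝ) (hs : s ≠ 0)
    (hcomm :
      (!![0, s, 0; s, 0, 0; 0, 0, 0] : Matrix (Fin 3) (Fin 3) ℝ) *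
        !![a^2 + b^2, b*c, 0; b*c, c^2, 0; 0, 0, 1] =
      (!![a^2 + b^2, b*c, 0; b*c, c^2, 0; 0, 0, 1] : Matrix (Fin 3) (Fin 3) ℝ) *
        !![0, s, 0; s, 0, 0; 0, 0, 0]) :
    a^2 + b^2 = c^2 := by
  have h := congrFun (congrFun hcomm 0) 1
  simp [Matrix.mul_apply, Fin.sum_univ_three] at h
  have : s * (c^2 - (a^2+b^2)) = 0 := by ring_nf; ring_nf at h; linarith
  rcases mul_eq_zero.mp this with h' | h'
  · exact absurd h' hs
  · linarith
end

section
/- Let a, b, c, s ∈ ℝ with s ≠ 0. Define the 3×3 real matrices σ̄ := ![![0, s, 0], ![s, 0, 0], ![0, 0, 0]] and C := ![![a^2, a*b, 0], ![a*b, b^2 + c^2, 0], ![0, 0, 1]]. If σ̄·C = C·σ̄, then a^2 = b^2 + c^2. -/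
open Matrix

/-- Necessary condition (Eq. (1-8)): if a Lagrangian pure shear stress commutes with
the right Cauchy–Green tensor of the planar motion, then `a² = b² + c²`. -/
theorem lagrangian_pure_shear_necessary_condition (a b c s : ℝ) (hs : s ≠ 0)
    (hcomm :
      (!![0, s, 0; s, 0, 0; 0, 0, 0] : Matrix (Fin 3) (Fin 3) ℝ) *
        !![a^2, a*b, 0; a*b, b^2 + c^2, 0; 0, 0, 1] =
      (!![a^2, a*b, 0; a*b, b^2 + c^2, 0; 0, 0, 1] : Matrix (Fin 3) (Fin 3) ℝ) *
        !![0, s, 0; s, 0, 0; 0, 0, 0]) :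
    a^2 = b^2 + c^2 := by
  have h := congrFun (congrFun hcomm 0) 1
  simp [Matrix.mul_apply, Fin.sum_univ_three] at h
  have : s * (a^2 - (b^2+c^2)) = 0 := by ring_nf; ring_nf at h; linarith
  rcases mul_eq_zero.mp this with h'|h'
  · exact absurd h' hs
  · linarith
end

section
/- Let μ, λ_L, α ∈ ℝ and let f : ℝ → ℝ be differentiable on (0, ∞) with f(1/x) = −f(x) for all x > 0. Set λ₁ := exp(α), λ₂ := exp(−α), λ₃ := 1, and for i ∈ {1,2} set g_i := λ_L·(f(λ₁) + f(λ₂) + f(λ₃)) + 2μ·f(λ_i). Define the 2×2 real matrices P₁ := (1/2) • ![![1, 1], ![1, 1]], P₂ := (1/2) • ![![1, −1], ![−1, 1]], and σ := g₁·f'(λ₁)·λ₁ • P₁ + g₂·f'(λ₂)·λ₂ • P₂. Then σ = (2μ·f(exp α)·f'(exp α)·exp α) • ![![0, 1], ![1, 0]]; in particular σ has zero diagonal entries (σ is an Eulerian pure shear stress with shear component s(α) = 2μ f(e^α) f'(e^α) e^α). -/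
/-!
The symmetry `f (1/x) = -f x` gives `f 1 = 0` and `f (e^{-α}) = -f (e^α)`, and differentiating it
gives `e^{-α} f'(e^{-α}) = e^α f'(e^α)`. So the volumetric term of `g₁, g₂` vanishes, the two
coefficients of `σ` are opposite, and `P₁ - P₂` is the off-diagonal matrix `!![0, 1; 1, 0]`.
-/

open Filter Topology

section SymmetricallyPhysical

variable {f : ℝ → ℝ}

theorem map_one_eq_zero_of_map_inv_eq_neg (hsp : ∀ x : ℝ, 0 < x → f (1/x) = -f x) : f 1 = 0 := by
  have h := hsp 1 one_pos
  rw [div_one] at h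
  linarith

theorem eventuallyEq_neg_comp_inv (hsp : ∀ x : ℝ, 0 < x → f (1/x) = -f x) {x : ℝ} (hx : 0 < x) :
    f =ᶠ[𝓝 x] fun y => -f y⁻¹ := by
  filter_upwards [Ioi_mem_nhds hx] with y hy
  rw [← one_div, hsp y hy, neg_neg]

theorem differentiableAt_inv_of_map_inv_eq_neg (hsp : ∀ x : ℝ, 0 < x → f (1/x) = -f x) {x : ℝ}
    (hx : 0 < x) (hf : DifferentiableAt ℝ f x) : DifferentiableAt ℝ f x⁻¹ := by
  have hf' : DifferentiableAt ℝ f x⁻¹⁻¹ := by rwa [inv_inv]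
  exact ((hf'.comp x⁻¹ (differentiableAt_inv (inv_ne_zero hx.ne'))).neg).congr_of_eventuallyEq
    (eventuallyEq_neg_comp_inv hsp (inv_pos.mpr hx))

/-- `f` is differentiable at `x` exactly when it is at `x⁻¹`; otherwise both derivatives are the
junk value `0`. -/
theorem deriv_inv_mul_inv_of_map_inv_eq_neg (hsp : ∀ x : ℝ, 0 < x → f (1/x) = -f x) {x : ℝ}
    (hx : 0 < x) : deriv f x⁻¹ * x⁻¹ = deriv f x * x := by
  by_cases hd : DifferentiableAt ℝ f x⁻¹
  · have hchain : HasDerivAt (fun y => -f y⁻¹) (-(deriv f x⁻¹ * -(x ^ 2)⁻¹)) x :=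
      (hd.hasDerivAt.comp x (hasDerivAt_inv hx.ne')).neg
    rw [(hchain.congr_of_eventuallyEq (eventuallyEq_neg_comp_inv hsp hx)).deriv]
    field_simp
  · have hnd : ¬DifferentiableAt ℝ f x := fun h =>
      hd (differentiableAt_inv_of_map_inv_eq_neg hsp hx h)
    rw [deriv_zero_of_not_differentiableAt hd, deriv_zero_of_not_differentiableAt hnd, zero_mul,
      zero_mul]

end SymmetricallyPhysical

theorem smul_add_neg_smul_eigenprojections {K : Type*} [Field K] [NeZero (2 : K)] (a : K) :
    a • ((1/2 : K) • !![1, 1; 1, 1]) + (-a) • ((1/2 : K) • !![1, -1; -1, 1]) =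
      a • (!![0, 1; 1, 0] : Matrix (Fin 2) (Fin 2) K) := by
  ext i j
  fin_cases i <;> fin_cases j <;> simp [← div_eq_mul_inv]

theorem hlih_sp_lfss_pure_shear_general (μ lamL α : ℝ) (f : ℝ → ℝ)
    (hsp : ∀ x : ℝ, 0 < x → f (1/x) = -f x) :
    let l₁ : ℝ := Real.exp α
    let l₂ : ℝ := Real.exp (-α)
    let l₃ : ℝ := 1
    let g₁ : ℝ := lamL * (f l₁ + f l₂ + f l₃) + 2*μ*(f l₁)
    let g₂ : ℝ := lamL * (f l₁ + f l₂ + f l₃) + 2*μ*(f l₂)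
    let P₁ : Matrix (Fin 2) (Fin 2) ℝ := (1/2 : ℝ) • !![1, 1; 1, 1]
    let P₂ : Matrix (Fin 2) (Fin 2) ℝ := (1/2 : ℝ) • !![1, -1; -1, 1]
    let σ : Matrix (Fin 2) (Fin 2) ℝ :=
      (g₁ * deriv f l₁ * l₁) • P₁ + (g₂ * deriv f l₂ * l₂) • P₂
    σ = (2*μ * f (Real.exp α) * deriv f (Real.exp α) * Real.exp α) • !![0, 1; 1, 0] ∧
    σ 0 0 = 0 ∧ σ 1 1 = 0 := by
  intro l₁ l₂ l₃ g₁ g₂ P₁ P₂ σ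
  have hl₂ : l₂ = l₁⁻¹ := Real.exp_neg α
  have hf₁ : f l₃ = 0 := map_one_eq_zero_of_map_inv_eq_neg hsp
  have hf₂ : f l₂ = -f l₁ := by rw [hl₂, ← one_div, hsp l₁ (Real.exp_pos α)]
  have hd₂ : deriv f l₂ * l₂ = deriv f l₁ * l₁ := by
    rw [hl₂, deriv_inv_mul_inv_of_map_inv_eq_neg hsp (Real.exp_pos α)]
  have hc₂ : g₂ * deriv f l₂ * l₂ = -(g₁ * deriv f l₁ * l₁) := by
    rw [mul_assoc, hd₂]
    simp only [g₁, g₂, hf₁, hf₂]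
    ring
  have hc₁ : g₁ * deriv f l₁ * l₁ = 2*μ * f l₁ * deriv f l₁ * l₁ := by
    simp only [g₁, hf₁, hf₂]
    ring
  have hσ : σ = (2*μ * f l₁ * deriv f l₁ * l₁) • !![0, 1; 1, 0] := by
    simp only [σ, P₁, P₂, hc₂, hc₁]
    exact smul_add_neg_smul_eigenprojections _
  exact ⟨hσ, by simp [hσ], by simp [hσ]⟩

/-- Proposition 4.1: for a Hill linear isotropic hyperelastic model based on a
symmetrically physical scale function `f` (Lamé parameters `lamL`, `μ`), the LFSS
deformation leads to an Eulerian pure shear stress with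
`s(α) = 2μ f(e^α) f'(e^α) e^α`. -/
theorem hlih_sp_lfss_pure_shear (μ lamL α : ℝ) (f : ℝ → ℝ)
    (hdiff : ∀ x ∈ Set.Ioi (0:ℝ), DifferentiableAt ℝ f x)
    (hsp : ∀ x : ℝ, 0 < x → f (1/x) = -f x) :
    let l₁ : ℝ := Real.exp α
    let l₂ : ℝ := Real.exp (-α)
    let l₃ : ℝ := 1
    let g₁ : ℝ := lamL * (f l₁ + f l₂ + f l₃) + 2*μ*(f l₁)
    let g₂ : ℝ := lamL * (f l₁ + f l₂ + f l₃) + 2*μ*(f l₂)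
    let P₁ : Matrix (Fin 2) (Fin 2) ℝ := (1/2 : ℝ) • !![1, 1; 1, 1]
    let P₂ : Matrix (Fin 2) (Fin 2) ℝ := (1/2 : ℝ) • !![1, -1; -1, 1]
    let σ : Matrix (Fin 2) (Fin 2) ℝ :=
      (g₁ * deriv f l₁ * l₁) • P₁ + (g₂ * deriv f l₂ * l₂) • P₂
    σ = (2*μ * f (Real.exp α) * deriv f (Real.exp α) * Real.exp α) • !![0, 1; 1, 0] ∧
    σ 0 0 = 0 ∧ σ 1 1 = 0 :=
  hlih_sp_lfss_pure_shear_general μ lamL α f hsp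
end

section
/- For all α, s ∈ ℝ, let R(α) := (cosh(2α))^(−1/2) • ![![cosh α, sinh α], ![−sinh α, cosh α]] and σ̄ := s • ![![0, 1], ![1, 0]] (2×2 real matrices). Then R(α)·σ̄·R(α)ᵀ = ![![s·tanh(2α), s/cosh(2α)], ![s/cosh(2α), −s·tanh(2α)]]. In particular, if a material under RFSS deformation has the Lagrangian pure shear rotated Cauchy stress σ̄ with σ̄₁₂ = s, then its Cauchy stress components are σ₁₂ = s/cosh(2α), σ₁₁ = s·tanh(2α), σ₂₂ = −σ₁₁. -/
open Matrix Real

/-!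
Write `R(α) = (cosh 2α)^(-1/2) • Q` with `Q = !![cosh α, sinh α; -sinh α, cosh α]`.
Conjugating the swap matrix by `Q` gives `!![2 ch sh, ch² - sh²; ch² - sh², -2 ch sh]`, which the
double-angle formulas and `ch² - sh² = 1` turn into `!![sinh 2α, 1; 1, -sinh 2α]`; the scalar
factor then contributes `1 / cosh 2α`.
-/

theorem rotation_mul_swap_mul_transpose {K : Type*} [CommRing K] (a b : K) :
    !![a, b; -b, a] * !![0, 1; 1, 0] * (!![a, b; -b, a])ᵀ =
      !![2 * a * b, a ^ 2 - b ^ 2; a ^ 2 - b ^ 2, -(2 * a * b)] := by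
  ext i j
  fin_cases i <;> fin_cases j <;> simp [Matrix.mul_apply, Fin.sum_univ_two] <;> ring

theorem hyperbolicRotation_mul_swap_mul_transpose (α : ℝ) :
    !![cosh α, sinh α; -sinh α, cosh α] * !![0, 1; 1, 0] *
        (!![cosh α, sinh α; -sinh α, cosh α])ᵀ =
      !![sinh (2 * α), 1; 1, -sinh (2 * α)] := by
  rw [rotation_mul_swap_mul_transpose, cosh_sq_sub_sinh_sq, sinh_two_mul]
  congr 2 <;> ring_nf

/-- Eq. (4-13): the Cauchy stress obtained by rotating a Lagrangian pure shear
rotated Cauchy stress `σ̄` under RFSS deformation: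
`σ₁₂ = s/cosh 2α`, `σ₁₁ = s·tanh 2α`, `σ₂₂ = −σ₁₁`. -/
theorem rfss_cauchy_stress_from_lagrangian_pure_shear (α s : ℝ) :
    let R : Matrix (Fin 2) (Fin 2) ℝ :=
      (Real.sqrt (Real.cosh (2*α)))⁻¹ • !![Real.cosh α, Real.sinh α; -Real.sinh α, Real.cosh α]
    let σbar : Matrix (Fin 2) (Fin 2) ℝ := s • !![0, 1; 1, 0]
    R * σbar * Rᵀ =
      !![s * Real.tanh (2*α), s / Real.cosh (2*α);
         s / Real.cosh (2*α), -(s * Real.tanh (2*α))] := by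
  intro R σbar
  have hscale : (√(cosh (2 * α)))⁻¹ * (√(cosh (2 * α)))⁻¹ = (cosh (2 * α))⁻¹ := by
    rw [← mul_inv, mul_self_sqrt (cosh_pos _).le]
  have hconj : R * σbar * Rᵀ = ((cosh (2 * α))⁻¹ * s) • !![sinh (2 * α), 1; 1, -sinh (2 * α)] := by
    simp only [R, σbar, transpose_smul, Matrix.smul_mul, Matrix.mul_smul, smul_smul,
      hyperbolicRotation_mul_swap_mul_transpose]
    congr 1
    rw [← hscale]
    ring
  rw [hconj, tanh_eq_sinh_div_cosh]
  ext i j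
  fin_cases i <;> fin_cases j <;> simp <;> ring
end

section
/- Let μ, α ∈ ℝ and F_L(α) := (cosh(2α))^(−1/2) • ![![1, sinh(2α)], ![0, cosh(2α)]] (a 2×2 real matrix). Define σ_A := μ • (F_L(α)·F_L(α)ᵀ − 1). Then σ_A = ![![μ·(cosh(2α) − 1), μ·sinh(2α)], ![μ·sinh(2α), μ·(cosh(2α) − 1)]]. Moreover, if μ > 0 and α > 0, then the diagonal entries of σ_A are strictly positive; hence σ_A is not a pure shear stress. -/
open Matrix Real

/-!
Since `cosh² − sinh² = 1`, the left Cauchy–Green tensor of finite simple shear is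
`c = !![cosh 2α, sinh 2α; sinh 2α, cosh 2α]`, so `σ_A = μ (c − I)` carries `μ (cosh 2α − 1)` on its
diagonal, which is positive because `cosh` exceeds `1` away from `0`.
-/

lemma upperTriangular_mul_transpose_of_sq_sub_sq_eq_one {c s : ℝ} (h : c ^ 2 - s ^ 2 = 1) :
    !![1, s; 0, c] * !![1, s; 0, c]ᵀ = c • !![c, s; s, c] := by
  ext i j
  fin_cases i <;> fin_cases j <;> simp [Matrix.mul_apply, mul_comm]
  linear_combination -h

lemma lfss_leftCauchyGreen (x : ℝ) :
    let F : Matrix (Fin 2) (Fin 2) ℝ := (√(cosh x))⁻¹ • !![1, sinh x; 0, cosh x]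
    F * Fᵀ = !![cosh x, sinh x; sinh x, cosh x] := by
  intro F
  have hc : 0 < cosh x := cosh_pos x
  have hscale : (√(cosh x))⁻¹ * (√(cosh x))⁻¹ = (cosh x)⁻¹ := by
    rw [← mul_inv, mul_self_sqrt hc.le]
  calc F * Fᵀ
      = ((√(cosh x))⁻¹ * (√(cosh x))⁻¹) •
          (!![1, sinh x; 0, cosh x] * !![1, sinh x; 0, cosh x]ᵀ) := by
        simp only [F, transpose_smul, Matrix.smul_mul, Matrix.mul_smul, smul_smul]
    _ = !![cosh x, sinh x; sinh x, cosh x] := by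
        rw [hscale, upperTriangular_mul_transpose_of_sq_sub_sq_eq_one (cosh_sq_sub_sinh_sq x),
          smul_smul, inv_mul_cancel₀ hc.ne', one_smul]

/-- Eq. (4-21): for the Ogden-A (neo-Hookean / Simo–Pister) model under LFSS
deformation, the Cauchy stress `σ_A = μ(c − I)` has strictly positive diagonal
entries when `μ > 0` and `α > 0`; hence it is not a pure shear stress. -/
theorem ogden_A_lfss_not_pure_shear (μ α : ℝ) :
    let F_L : Matrix (Fin 2) (Fin 2) ℝ :=
      (Real.sqrt (Real.cosh (2*α)))⁻¹ • !![1, Real.sinh (2*α); 0, Real.cosh (2*α)]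
    let σ_A : Matrix (Fin 2) (Fin 2) ℝ := μ • (F_L * F_Lᵀ - 1)
    σ_A = !![μ * (Real.cosh (2*α) - 1), μ * Real.sinh (2*α);
             μ * Real.sinh (2*α), μ * (Real.cosh (2*α) - 1)] ∧
    (0 < μ → 0 < α → 0 < σ_A 0 0 ∧ 0 < σ_A 1 1) := by
  intro F_L σ_A
  have hσ : σ_A = !![μ * (cosh (2*α) - 1), μ * sinh (2*α);
      μ * sinh (2*α), μ * (cosh (2*α) - 1)] := by
    simp only [σ_A, F_L, lfss_leftCauchyGreen (2*α)]
    ext i j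
    fin_cases i <;> fin_cases j <;> simp
  refine ⟨hσ, fun hμ hα => ?_⟩
  have hdiag : 0 < μ * (cosh (2*α) - 1) :=
    mul_pos hμ (sub_pos.2 (one_lt_cosh.2 (by positivity)))
  rw [hσ]
  exact ⟨hdiag, hdiag⟩
end

section
/- Let μ, α ∈ ℝ and F_L(α) := (cosh(2α))^(−1/2) • ![![1, sinh(2α)], ![0, cosh(2α)]] (a 2×2 real matrix). Then: (i) (F_L(α)·F_L(α)ᵀ)⁻¹ = ![![cosh(2α), −sinh(2α)], ![−sinh(2α), cosh(2α)]]; (ii) σ_B := μ • (1 − (F_L(α)·F_L(α)ᵀ)⁻¹) = ![![μ·(1 − cosh(2α)), μ·sinh(2α)], ![μ·sinh(2α), μ·(1 − cosh(2α))]]; and (iii) if μ > 0 and α > 0, the diagonal entries of σ_B are strictly negative, hence σ_B is not a pure shear stress. -/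
/-!
Since `1 + sinh² = cosh²`, the factor `cosh(2α)⁻¹` cancels in `F_L F_Lᵀ`, leaving the symmetric
matrix with diagonal `cosh(2α)` and off-diagonal `sinh(2α)`. Its determinant is
`cosh² − sinh² = 1`, so its inverse is its adjugate. The diagonal entries of `σ_B` are then
`μ (1 − cosh(2α))`, negative because `cosh > 1` away from `0`.
-/

open Matrix Real

theorem Matrix.inv_of_fin_two_of_det_eq_one {R : Type*} [CommRing R] {a b c d : R}
    (h : a * d - b * c = 1) : (!![a, b; c, d])⁻¹ = !![d, -b; -c, a] := by
  rw [inv_def, det_fin_two_of, h, Ring.inverse_one, one_smul, adjugate_fin_two_of]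

theorem Matrix.smul_one_sub_of_fin_two {R : Type*} [CommRing R] (μ a b c d : R) :
    μ • (1 - !![a, b; c, d]) = !![μ * (1 - a), -(μ * b); -(μ * c), μ * (1 - d)] := by
  rw [one_fin_two]
  ext i j
  fin_cases i <;> fin_cases j <;> simp [mul_sub]

noncomputable def lfssDeformationGradient (α : ℝ) : Matrix (Fin 2) (Fin 2) ℝ :=
  (√(cosh (2 * α)))⁻¹ • !![1, sinh (2 * α); 0, cosh (2 * α)]

theorem lfssDeformationGradient_mul_transpose (α : ℝ) :
    lfssDeformationGradient α * (lfssDeformationGradient α)ᵀ =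
      !![cosh (2 * α), sinh (2 * α); sinh (2 * α), cosh (2 * α)] := by
  set c := cosh (2 * α)
  set s := sinh (2 * α)
  have hc : 0 < c := cosh_pos _
  have hk : (√c)⁻¹ * (√c)⁻¹ = c⁻¹ := by rw [← mul_inv, mul_self_sqrt hc.le]
  have hU : !![1, s; 0, c] * !![1, s; 0, c]ᵀ = c • !![c, s; s, c] := by
    have hcs : 1 + s * s = c * c := by nlinarith [cosh_sq_sub_sinh_sq (2 * α)]
    ext i j
    fin_cases i <;> fin_cases j <;> simp [mul_apply, Fin.sum_univ_two, hcs, mul_comm]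
  rw [lfssDeformationGradient, transpose_smul, smul_mul_smul_comm, hk, hU, smul_smul,
    inv_mul_cancel₀ hc.ne', one_smul]

theorem inv_lfssDeformationGradient_mul_transpose (α : ℝ) :
    (lfssDeformationGradient α * (lfssDeformationGradient α)ᵀ)⁻¹ =
      !![cosh (2 * α), -sinh (2 * α); -sinh (2 * α), cosh (2 * α)] := by
  rw [lfssDeformationGradient_mul_transpose, inv_of_fin_two_of_det_eq_one]
  simpa only [sq] using cosh_sq_sub_sinh_sq (2 * α)

/-- Eq. (4-22): for the Ogden-B model under LFSS deformation, the Cauchy stress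
`σ_B = μ(I − c⁻¹)` has strictly negative diagonal entries when `μ > 0` and `α > 0`;
hence it is not a pure shear stress. -/
theorem ogden_B_lfss_not_pure_shear (μ α : ℝ) :
    let F_L : Matrix (Fin 2) (Fin 2) ℝ :=
      (Real.sqrt (Real.cosh (2*α)))⁻¹ • !![1, Real.sinh (2*α); 0, Real.cosh (2*α)]
    let σ_B : Matrix (Fin 2) (Fin 2) ℝ := μ • ((1 : Matrix (Fin 2) (Fin 2) ℝ) - (F_L * F_Lᵀ)⁻¹)
    (F_L * F_Lᵀ)⁻¹ =
      !![Real.cosh (2*α), -Real.sinh (2*α); -Real.sinh (2*α), Real.cosh (2*α)] ∧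
    σ_B = !![μ * (1 - Real.cosh (2*α)), μ * Real.sinh (2*α);
             μ * Real.sinh (2*α), μ * (1 - Real.cosh (2*α))] ∧
    (0 < μ → 0 < α → σ_B 0 0 < 0 ∧ σ_B 1 1 < 0) := by
  intro F_L σ_B
  have hc : (F_L * F_Lᵀ)⁻¹ = _ := inv_lfssDeformationGradient_mul_transpose α
  have hσ : σ_B = !![μ * (1 - cosh (2 * α)), μ * sinh (2 * α);
      μ * sinh (2 * α), μ * (1 - cosh (2 * α))] := by
    simp only [σ_B, hc, smul_one_sub_of_fin_two, mul_neg, neg_neg]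
  refine ⟨hc, hσ, fun hμ hα => ?_⟩
  have hdiag : μ * (1 - cosh (2 * α)) < 0 :=
    mul_neg_of_pos_of_neg hμ (sub_neg.mpr (one_lt_cosh.mpr (by positivity)))
  simp only [hσ]
  exact ⟨hdiag, hdiag⟩
end
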